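/- For D odd and N = D+2, the map X ↦ X + [1,D+1] (symmetric difference with [1,D+1]) is a fixed-point-free involution of E_N which preserves membership of N, and it maps {X ∈ E_N : N ∉ X, γ(X) = t} bijectively onto {X ∈ E_N : N ∉ X, γ(X) = −t} for every even integer t. -/

import Mathlib

def gam (X : Finset ℕ) : ℤ :=
  ((X.filter (fun x => x % 2 = 0)).card : ℤ) - ((X.filter (fun x => x % 2 = 1)).card : ℤ)

/-!
With `S = [1, D + 1]`, the map is `X ↦ X ∆ S`. It is an involution; it preserves the parity of
`|X|` because `|X ∆ S| ≡ |X| + |S|` mod 2 and `|S| = D + 1` is even; it has no fixed point because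
`S ≠ ∅`; and it preserves membership of `N = D + 2` because `N ∉ S`. A set `X ⊆ [1, N]` avoiding `N`
lies in `S`, so its image is the complement `S \ X`, and `γ(S \ X) = γ(S) - γ(X) = -γ(X)` since
`S = [1, 2k]` has as many even as odd elements.
-/

open Finset
open scoped symmDiff

lemma gam_eq_sum (X : Finset ℕ) : gam X = ∑ x ∈ X, (-1 : ℤ) ^ x := by
  rw [← sum_filter_add_sum_filter_not X (fun x => x % 2 = 0)]
  have hodd : X.filter (fun x => ¬x % 2 = 0) = X.filter (fun x => x % 2 = 1) :=
    filter_congr fun x _ => by omega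
  rw [hodd, sum_congr rfl fun x hx => (Nat.even_iff.2 (mem_filter.1 hx).2).neg_one_pow,
    sum_congr rfl fun x hx => (Nat.odd_iff.2 (mem_filter.1 hx).2).neg_one_pow]
  simp [gam, sub_eq_add_neg]

lemma gam_sdiff {X S : Finset ℕ} (h : X ⊆ S) : gam (S \ X) = gam S - gam X := by
  simp only [gam_eq_sum, sum_sdiff_eq_sub h]

lemma gam_Icc_one_two_mul (m : ℕ) : gam (Icc 1 (2 * m)) = 0 := by
  induction m with
  | zero => rfl
  | succ m ih =>
    rw [gam_eq_sum] at ih ⊢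
    rw [show 2 * (m + 1) = 2 * m + 1 + 1 by ring, sum_Icc_succ_top (by omega),
      sum_Icc_succ_top (by omega), ih]
    simp [pow_succ, pow_mul]

lemma card_symmDiff_add_two_mul_card_inter {α : Type*} [DecidableEq α] (s t : Finset α) :
    #(s ∆ t) + 2 * #(s ∩ t) = #s + #t := by
  rw [symmDiff_eq_sup_sdiff_inf, ← card_union_add_card_inter s t, sup_eq_union, inf_eq_inter,
    card_sdiff_of_subset inter_subset_union]
  have := card_le_card (inter_subset_union (s := s) (t := t))
  omega

lemma even_card_symmDiff {α : Type*} [DecidableEq α] {s t : Finset α} (hs : Even #s)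
    (ht : Even #t) : Even #(s ∆ t) := by
  have := card_symmDiff_add_two_mul_card_inter s t
  have hsum : Even (#(s ∆ t) + 2 * #(s ∩ t)) := this ▸ hs.add ht
  exact (Nat.even_add.1 hsum).2 (even_two_mul _)

lemma subset_Icc_of_subset_Icc_add_one {X : Finset ℕ} {a b : ℕ} (hX : X ⊆ Icc a (b + 1))
    (hb : b + 1 ∉ X) : X ⊆ Icc a b := fun x hx => by
  have hx' := mem_Icc.1 (hX hx)
  have hne : x ≠ b + 1 := fun h => hb (h ▸ hx)
  exact mem_Icc.2 (by omega)

section Reflection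

variable {D : ℕ}

lemma even_card_Icc_one_add_one (hD : Odd D) : Even #(Icc 1 (D + 1)) := by
  simpa using hD.add_one

lemma gam_Icc_one_add_one (hD : Odd D) : gam (Icc 1 (D + 1)) = 0 := by
  obtain ⟨k, rfl⟩ := hD
  exact gam_Icc_one_two_mul (k + 1)

lemma mapsTo_symmDiff_Icc (hD : Odd D) (t : ℤ) :
    Set.MapsTo (· ∆ Icc 1 (D + 1))
      {X | X ⊆ Icc 1 (D + 2) ∧ Even #X ∧ D + 2 ∉ X ∧ gam X = t}
      {X | X ⊆ Icc 1 (D + 2) ∧ Even #X ∧ D + 2 ∉ X ∧ gam X = -t} := by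
  rintro X ⟨hX, hXeven, hN, rfl⟩
  have hXS : X ⊆ Icc 1 (D + 1) := subset_Icc_of_subset_Icc_add_one hX hN
  refine ⟨?_, even_card_symmDiff hXeven (even_card_Icc_one_add_one hD), ?_, ?_⟩
  all_goals dsimp only; rw [symmDiff_of_le hXS]
  · exact sdiff_subset.trans (Icc_subset_Icc_right (by omega))
  · simp
  · rw [gam_sdiff hXS, gam_Icc_one_add_one hD, zero_sub]

end Reflection

theorem stmt11_general (D N : ℕ) (hD : Odd D) (hN : N = D + 2) :
    (∀ X : Finset ℕ, X ⊆ Finset.Icc 1 N → Even X.card →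
      (symmDiff X (Finset.Icc 1 (D + 1)) ⊆ Finset.Icc 1 N ∧
       Even (symmDiff X (Finset.Icc 1 (D + 1))).card ∧
       symmDiff X (Finset.Icc 1 (D + 1)) ≠ X ∧
       symmDiff (symmDiff X (Finset.Icc 1 (D + 1))) (Finset.Icc 1 (D + 1)) = X ∧
       (N ∈ symmDiff X (Finset.Icc 1 (D + 1)) ↔ N ∈ X))) ∧
    (∀ t : ℤ, Even t →
      Set.BijOn (fun X => symmDiff X (Finset.Icc 1 (D + 1)))
        {X : Finset ℕ | X ⊆ Finset.Icc 1 N ∧ Even X.card ∧ N ∉ X ∧ gam X = t}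
        {X : Finset ℕ | X ⊆ Finset.Icc 1 N ∧ Even X.card ∧ N ∉ X ∧ gam X = -t}) := by
  subst hN
  have hN : D + 2 ∉ Icc 1 (D + 1) := by simp
  refine ⟨fun X hX hXeven => ⟨?_, even_card_symmDiff hXeven (even_card_Icc_one_add_one hD),
    ?_, symmDiff_left_involutive _ X, by simp [mem_symmDiff, hN]⟩, fun t _ => ?_⟩
  · exact symmDiff_le_sup.trans (union_subset hX (Icc_subset_Icc_right (by omega)))
  · exact fun h => nonempty_Icc.2 (by omega) |>.ne_empty (symmDiff_eq_left.1 h)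
  · have hinv := symmDiff_left_involutive (Icc 1 (D + 1))
    refine Set.InvOn.bijOn (f' := (· ∆ Icc 1 (D + 1))) ⟨fun X _ => hinv X, fun X _ => hinv X⟩
      (mapsTo_symmDiff_Icc hD t) ?_
    simpa only [neg_neg] using mapsTo_symmDiff_Icc hD (-t)

/-- for odd `D ≥ 1`, `N = D+2`, the map `X ↦ X Δ [1,D+1]`
is a fixed-point-free involution of `E_N` (the even-cardinality subsets of
`[1,N]`), preserves membership of `N`, and maps
`{X ∈ E_N : N ∉ X, γ(X) = t}` bijectively onto `{X ∈ E_N : N ∉ X, γ(X) = −t}`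
for every even integer `t`. -/
theorem stmt11 (D N : ℕ) (hD : Odd D) (h1 : 1 ≤ D) (hN : N = D + 2) :
    (∀ X : Finset ℕ, X ⊆ Finset.Icc 1 N → Even X.card →
      (symmDiff X (Finset.Icc 1 (D + 1)) ⊆ Finset.Icc 1 N ∧
       Even (symmDiff X (Finset.Icc 1 (D + 1))).card ∧
       symmDiff X (Finset.Icc 1 (D + 1)) ≠ X ∧
       symmDiff (symmDiff X (Finset.Icc 1 (D + 1))) (Finset.Icc 1 (D + 1)) = X ∧
       (N ∈ symmDiff X (Finset.Icc 1 (D + 1)) ↔ N ∈ X))) ∧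
    (∀ t : ℤ, Even t →
      Set.BijOn (fun X => symmDiff X (Finset.Icc 1 (D + 1)))
        {X : Finset ℕ | X ⊆ Finset.Icc 1 N ∧ Even X.card ∧ N ∉ X ∧ gam X = t}
        {X : Finset ℕ | X ⊆ Finset.Icc 1 N ∧ Even X.card ∧ N ∉ X ∧ gam X = -t}) :=
  stmt11_general D N hD hN
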